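/- arXiv:1810.06275 — 2 statements merged into one kernel-verified Lean document; each statement's English description precedes it below -/
import Mathlib

section
/- Almost surely, the Hausdorff distance ρ_H( n^{-1} conv{S₀, S₁, …, S_n} , [0, μ] ) → 0 as n → ∞, where conv denotes the convex hull in ℝ^d and [0, μ] = { t μ : t ∈ [0,1] } is the line segment from the origin to μ. -/
/-!
By the strong law of large numbers `n⁻¹ S_n → μ` almost surely, i.e. `S_k - kμ = o(k)`; a
sequence that is `o(k)` has running maximum `o(n)`, so the points `n⁻¹ S_k`, `k ≤ n`, are
uniformly close to `n⁻¹ k μ`. Since closed thickenings of convex sets are convex, passing to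
convex hulls does not increase this distance, and the convex hull of `{n⁻¹ k μ : k ≤ n}` is
exactly `[0, μ]`.
-/

open MeasureTheory ProbabilityTheory Filter Set Metric Topology Asymptotics

theorem Asymptotics.IsLittleO.eventually_forall_le_norm_le_mul {E : Type*}
    [SeminormedAddCommGroup E] {b : ℕ → E}
    (hb : b =o[atTop] (fun n : ℕ => (n : ℝ))) {ε : ℝ} (hε : 0 < ε) :
    ∀ᶠ n in atTop, ∀ k ≤ n, ‖b k‖ ≤ ε * n := by
  obtain ⟨N, hN⟩ := eventually_atTop.1 (hb.def hε)
  set C := ∑ k ∈ Finset.range N, ‖b k‖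
  have hC : ∀ᶠ n : ℕ in atTop, C ≤ ε * n :=
    (tendsto_natCast_atTop_atTop.const_mul_atTop hε).eventually_ge_atTop C
  filter_upwards [hC] with n hCn k hkn
  rcases lt_or_ge k N with hkN | hkN
  · exact (Finset.single_le_sum (fun i _ => norm_nonneg (b i)) (Finset.mem_range.2 hkN)).trans hCn
  · calc ‖b k‖ ≤ ε * ‖(k : ℝ)‖ := hN k hkN
      _ ≤ ε * n := by rw [Real.norm_natCast]; gcongr

section Convex

variable {E : Type*} [SeminormedAddCommGroup E] [NormedSpace ℝ E]

theorem hausdorffDist_convexHull_le_of_subset_cthickening {s t : Set E} {r : ℝ} (hr : 0 ≤ r)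
    (hst : s ⊆ cthickening r t) (hts : t ⊆ cthickening r s) :
    hausdorffDist (convexHull ℝ s) (convexHull ℝ t) ≤ r := by
  have infDist_hull_le : ∀ {u v : Set E}, u ⊆ cthickening r v →
      ∀ x ∈ convexHull ℝ u, infDist x (convexHull ℝ v) ≤ r := by
    intro u v huv x hx
    have hsub : convexHull ℝ u ⊆ cthickening r (convexHull ℝ v) :=
      convexHull_min (huv.trans (cthickening_subset_of_subset r (subset_convexHull ℝ v)))
        ((convex_convexHull ℝ v).cthickening r)
    rw [infDist]
    exact ENNReal.toReal_le_of_le_ofReal hr (mem_cthickening_iff.1 (hsub hx))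
  exact hausdorffDist_le_of_infDist hr (infDist_hull_le hst) (infDist_hull_le hts)

theorem hausdorffDist_convexHull_image_le {ι : Type*} {f g : ι → E} {I : Set ι} {r : ℝ}
    (hr : 0 ≤ r) (hfg : ∀ i ∈ I, dist (f i) (g i) ≤ r) :
    hausdorffDist (convexHull ℝ (f '' I)) (convexHull ℝ (g '' I)) ≤ r := by
  refine hausdorffDist_convexHull_le_of_subset_cthickening hr ?_ ?_
  · rintro _ ⟨i, hi, rfl⟩
    exact mem_cthickening_of_dist_le _ _ _ _ (mem_image_of_mem g hi) (hfg i hi)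
  · rintro _ ⟨i, hi, rfl⟩
    exact mem_cthickening_of_dist_le _ _ _ _ (mem_image_of_mem f hi)
      (dist_comm (f i) _ ▸ hfg i hi)

theorem convexHull_image_inv_smul_natCast_smul_Iic (μ : E) {n : ℕ} (hn : n ≠ 0) :
    convexHull ℝ ((fun k : ℕ => (n : ℝ)⁻¹ • ((k : ℝ) • μ)) '' Iic n) =
      segment ℝ 0 μ := by
  have hn' : (n : ℝ) ≠ 0 := Nat.cast_ne_zero.2 hn
  refine subset_antisymm (convexHull_min ?_ (convex_segment 0 μ)) ?_
  · rintro _ ⟨k, hk, rfl⟩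
    simp only [smul_smul, segment_eq_image', sub_zero, zero_add]
    refine ⟨(n : ℝ)⁻¹ * k, ⟨by positivity, ?_⟩, rfl⟩
    rw [inv_mul_le_one₀ (by positivity)]
    exact_mod_cast hk
  · rw [← convexHull_pair]
    refine convexHull_mono (pair_subset ⟨0, by simp, by simp⟩ ⟨n, mem_Iic.2 le_rfl, ?_⟩)
    simp [smul_smul, hn']

theorem isLittleO_sub_natCast_smul_of_tendsto_inv_smul {a : ℕ → E} {μ : E}
    (ha : Tendsto (fun n : ℕ => (n : ℝ)⁻¹ • a n) atTop (𝓝 μ)) :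
    (fun n : ℕ => a n - (n : ℝ) • μ) =o[atTop] (fun n : ℕ => (n : ℝ)) := by
  refine IsLittleO.of_bound fun c hc => ?_
  filter_upwards [(tendsto_iff_norm_sub_tendsto_zero.1 ha).eventually_le_const hc,
    eventually_ne_atTop 0] with n hn hn0
  have hn' : (n : ℝ) ≠ 0 := Nat.cast_ne_zero.2 hn0
  calc ‖a n - (n : ℝ) • μ‖ = ‖(n : ℝ)‖ * ‖(n : ℝ)⁻¹ • a n - μ‖ := by
        rw [← norm_smul, smul_sub, smul_inv_smul₀ hn']
    _ ≤ c * ‖(n : ℝ)‖ := by rw [mul_comm]; gcongr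

theorem tendsto_hausdorffDist_convexHull_segment {a : ℕ → E} {μ : E}
    (ha : Tendsto (fun n : ℕ => (n : ℝ)⁻¹ • a n) atTop (𝓝 μ)) :
    Tendsto (fun n : ℕ => hausdorffDist
        (convexHull ℝ ((fun k : ℕ => (n : ℝ)⁻¹ • a k) '' Iic n))
        (segment ℝ (0 : E) μ)) atTop (𝓝 0) := by
  rw [Metric.tendsto_nhds]
  intro ε hε
  have hsmall := IsLittleO.eventually_forall_le_norm_le_mul
    (isLittleO_sub_natCast_smul_of_tendsto_inv_smul ha) (half_pos hε)
  filter_upwards [hsmall, eventually_ne_atTop 0] with n hn hn0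
  have hn' : (0 : ℝ) < n := Nat.cast_pos.2 (Nat.pos_of_ne_zero hn0)
  rw [← convexHull_image_inv_smul_natCast_smul_Iic μ hn0, dist_zero_right,
    Real.norm_of_nonneg hausdorffDist_nonneg]
  refine (hausdorffDist_convexHull_image_le (half_pos hε).le fun k hk => ?_).trans_lt
    (half_lt_self hε)
  rw [dist_smul₀, dist_eq_norm, norm_inv, Real.norm_natCast, inv_mul_le_iff₀ hn', mul_comm]
  exact hn k hk

end Convex

theorem rw_convexHull_hausdorff_slln_general {d : ℕ}
    {Ω : Type*} [MeasureSpace Ω] [IsProbabilityMeasure (ℙ : Measure Ω)]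
    (ξ : ℕ → Ω → EuclideanSpace ℝ (Fin d))
    (hindep : iIndepFun (fun i : ℕ => ξ (i + 1)) ℙ)
    (hident : ∀ i : ℕ, IdentDistrib (ξ (i + 1)) (ξ 1) ℙ ℙ)
    (hint : Integrable (ξ 1) ℙ)
    (μv : EuclideanSpace ℝ (Fin d)) (hμ : ∫ ω, ξ 1 ω ∂ℙ = μv)
    (S : ℕ → Ω → EuclideanSpace ℝ (Fin d))
    (hS : ∀ n ω, S n ω = ∑ i ∈ Finset.Icc 1 n, ξ i ω) :
    ∀ᵐ ω ∂ℙ, Tendsto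
      (fun n : ℕ => hausdorffDist
        (convexHull ℝ ((fun k : ℕ => (n : ℝ)⁻¹ • S k ω) '' Iic n))
        (segment ℝ (0 : EuclideanSpace ℝ (Fin d)) μv))
      atTop (nhds 0) := by
  have hslln := strong_law_ae (μ := (ℙ : Measure Ω)) (fun i => ξ (i + 1)) hint
    (fun i j hij => hindep.indepFun hij) (fun i => (hident i).trans (hident 0).symm)
  filter_upwards [hslln] with ω hω
  have hsum : ∀ n, ∑ i ∈ Finset.range n, ξ (i + 1) ω = S n ω := fun n => by
    rw [hS, Finset.range_eq_Ico, Finset.sum_Ico_add' (fun i => ξ i ω)]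
    rfl
  refine tendsto_hausdorffDist_convexHull_segment ?_
  simpa [hsum, hμ] using hω

/-- **LLN for the convex hull of the random walk.** Almost surely, the rescaled convex
hull `n⁻¹ conv{S₀, S₁, …, S_n}` converges in Hausdorff distance to the segment
`[0, μ] = {tμ : t ∈ [0,1]}`. -/
theorem rw_convexHull_hausdorff_slln {d : ℕ} (hd : 1 ≤ d)
    {Ω : Type*} [MeasureSpace Ω] [IsProbabilityMeasure (ℙ : Measure Ω)]
    (ξ : ℕ → Ω → EuclideanSpace ℝ (Fin d))
    (hmeas : ∀ i, Measurable (ξ i))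
    (hindep : iIndepFun (fun i : ℕ => ξ (i + 1)) ℙ)
    (hident : ∀ i : ℕ, IdentDistrib (ξ (i + 1)) (ξ 1) ℙ ℙ)
    (hint : Integrable (ξ 1) ℙ)
    (μv : EuclideanSpace ℝ (Fin d)) (hμ : ∫ ω, ξ 1 ω ∂ℙ = μv)
    (S : ℕ → Ω → EuclideanSpace ℝ (Fin d))
    (hS : ∀ n ω, S n ω = ∑ i ∈ Finset.Icc 1 n, ξ i ω) :
    ∀ᵐ ω ∂ℙ, Tendsto
      (fun n : ℕ => hausdorffDist
        (convexHull ℝ ((fun k : ℕ => (n : ℝ)⁻¹ • S k ω) '' Iic n))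
        (segment ℝ (0 : EuclideanSpace ℝ (Fin d)) μv))
      atTop (nhds 0) :=
  rw_convexHull_hausdorff_slln_general ξ hindep hident hint μv hμ S hS
end

section
/- Almost surely, sup_{t ∈ [0,1]} ‖ n^{-1} G_{⌊nt⌋} − μ t / 2 ‖ → 0 as n → ∞; i.e., the rescaled centre-of-mass trajectories (n^{-1} G_{⌊nt⌋})_{t ∈ [0,1]} converge uniformly (hence in the Skorokhod sense, the limit being continuous) to the deterministic trajectory t ↦ μ t / 2. -/
open MeasureTheory ProbabilityTheory Filter Set

/-!
By the strong law of large numbers, almost surely `S n = n • μ + o(n)`. A sequence that is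
`o(n)` is so uniformly on initial segments: `max_{m ≤ n} ‖f m‖ = o(n)`. Averaging therefore gives
`G n = n • (μ / 2) + o(n)`, and since `|⌊n t⌋ / n - t| ≤ 1 / n`, the distance between
`n⁻¹ • G ⌊n t⌋` and `(t / 2) • μ` is at most `n⁻¹ max_{m ≤ n} ‖G m - m • (μ / 2)‖ + ‖μ‖ / n`,
uniformly in `t ∈ [0, 1]`.
-/

open Asymptotics Finset Topology

theorem sum_Icc_one_natCast (n : ℕ) : ∑ i ∈ Finset.Icc 1 n, (i : ℝ) = n * (n + 1) / 2 := by
  induction n with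
  | zero => simp
  | succ k ih =>
    rw [sum_Icc_succ_top (by omega), ih]
    push_cast
    ring

section NormedSpace

variable {E : Type*} [NormedAddCommGroup E]

theorem Asymptotics.IsLittleO.eventually_forall_le_norm_le {f : ℕ → E}
    (hf : f =o[atTop] (fun n : ℕ => (n : ℝ))) {c : ℝ} (hc : 0 < c) :
    ∀ᶠ n in atTop, ∀ m ≤ n, ‖f m‖ ≤ c * n := by
  obtain ⟨K, hK⟩ := eventually_atTop.1 (hf.def hc)
  have hhead : ∀ m < K, ‖f m‖ ≤ ∑ k ∈ range K, ‖f k‖ := fun m hm =>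
    single_le_sum (fun k _ => norm_nonneg (f k)) (mem_range.2 hm)
  filter_upwards [(tendsto_natCast_atTop_atTop.const_mul_atTop hc).eventually_ge_atTop
    (∑ k ∈ range K, ‖f k‖)] with n hn m hmn
  rcases lt_or_ge m K with hmK | hmK
  · exact (hhead m hmK).trans hn
  · calc ‖f m‖ ≤ c * ‖(m : ℝ)‖ := hK m hmK
      _ ≤ c * n := by rw [Real.norm_natCast]; gcongr

variable [NormedSpace ℝ E]

theorem isLittleO_sub_smul_of_tendsto_inv_smul {a : ℕ → E} {L : E}
    (h : Tendsto (fun n : ℕ => (n : ℝ)⁻¹ • a n) atTop (𝓝 L)) :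
    (fun n => a n - (n : ℝ) • L) =o[atTop] (fun n : ℕ => (n : ℝ)) := by
  rw [← isLittleOTVS_iff_isLittleO (𝕜 := ℝ), isLittleOTVS_iff_tendsto_inv_smul
    ((eventually_ne_atTop 0).mono fun n hn h0 => absurd h0 (by exact_mod_cast hn))]
  refine (tendsto_sub_nhds_zero_iff.2 h).congr' ((eventually_ne_atTop 0).mono fun n hn => ?_)
  have hn' : (n : ℝ) ≠ 0 := by exact_mod_cast hn
  dsimp only
  rw [smul_sub, smul_smul, inv_mul_cancel₀ hn', one_smul]

theorem Asymptotics.IsLittleO.inv_smul_sum_Icc {f : ℕ → E}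
    (hf : f =o[atTop] (fun n : ℕ => (n : ℝ))) :
    (fun n : ℕ => (n : ℝ)⁻¹ • ∑ i ∈ Finset.Icc 1 n, f i) =o[atTop] (fun n : ℕ => (n : ℝ)) := by
  refine IsLittleO.of_bound fun c hc => ?_
  filter_upwards [hf.eventually_forall_le_norm_le hc] with n hn
  rw [norm_smul, norm_inv, Real.norm_natCast]
  rcases n.eq_zero_or_pos with rfl | hnpos
  · simp
  calc (n : ℝ)⁻¹ * ‖∑ i ∈ Finset.Icc 1 n, f i‖ ≤ (n : ℝ)⁻¹ * (n * (c * n)) := by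
        gcongr
        refine (norm_sum_le _ _).trans ?_
        simpa [nsmul_eq_mul] using sum_le_card_nsmul (Finset.Icc 1 n) (fun i => ‖f i‖) (c * n)
          fun i hi => hn i (mem_Icc.1 hi).2
    _ = c * n := by field_simp

theorem isLittleO_cesaro_sub_half_smul {S : ℕ → E} {μ : E}
    (hS : (fun n => S n - (n : ℝ) • μ) =o[atTop] (fun n : ℕ => (n : ℝ))) :
    (fun n : ℕ => (n : ℝ)⁻¹ • ∑ i ∈ Finset.Icc 1 n, S i - (n : ℝ) • (2⁻¹ : ℝ) • μ)
      =o[atTop] (fun n : ℕ => (n : ℝ)) := by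
  have hsplit : ∀ n : ℕ, 1 ≤ n → (n : ℝ)⁻¹ • ∑ i ∈ Finset.Icc 1 n, S i - (n : ℝ) • (2⁻¹ : ℝ) • μ
      = (n : ℝ)⁻¹ • ∑ i ∈ Finset.Icc 1 n, (S i - (i : ℝ) • μ) + (2⁻¹ : ℝ) • μ := by
    intro n hn
    have hn0 : (n : ℝ) ≠ 0 := by positivity
    rw [sum_sub_distrib, ← sum_smul, sum_Icc_one_natCast]
    match_scalars
    · field_simp
    · field_simp
      ring
  have hconst : (fun _ : ℕ => (2⁻¹ : ℝ) • μ) =o[atTop] (fun n : ℕ => (n : ℝ)) :=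
    isLittleO_const_left.2 <| Or.inr <| by
      simpa [Function.comp_def] using tendsto_natCast_atTop_atTop
  exact (hS.inv_smul_sum_Icc.add hconst).congr'
    (eventually_atTop.2 ⟨1, fun n hn => (hsplit n hn).symm⟩) EventuallyEq.rfl

theorem norm_inv_smul_floor_sub_le (F : ℕ → E) (ν : E) {n : ℕ} (hn : 0 < n) {t : ℝ}
    (ht : 0 ≤ t) :
    ‖(n : ℝ)⁻¹ • F ⌊(n : ℝ) * t⌋₊ - t • ν‖
      ≤ (n : ℝ)⁻¹ * ‖F ⌊(n : ℝ) * t⌋₊ - (⌊(n : ℝ) * t⌋₊ : ℝ) • ν‖ + (n : ℝ)⁻¹ * ‖ν‖ := by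
  set m := ⌊(n : ℝ) * t⌋₊
  have hnR : (0 : ℝ) < n := by exact_mod_cast hn
  have hm_le : (m : ℝ) ≤ n * t := Nat.floor_le (by positivity)
  have hm_gt : n * t < m + 1 := Nat.lt_floor_add_one _
  have hdecomp : (n : ℝ)⁻¹ • F m - t • ν
      = (n : ℝ)⁻¹ • (F m - (m : ℝ) • ν) + ((n : ℝ)⁻¹ * m - t) • ν := by
    match_scalars <;> ring
  have hcoef : |(n : ℝ)⁻¹ * m - t| ≤ (n : ℝ)⁻¹ := by
    have hfactor : (n : ℝ)⁻¹ * m - t = (n : ℝ)⁻¹ * (m - n * t) := by field_simp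
    rw [hfactor, abs_mul, abs_of_pos (inv_pos.2 hnR)]
    refine mul_le_of_le_one_right (inv_pos.2 hnR).le ?_
    rw [abs_le]
    constructor <;> linarith
  rw [hdecomp]
  refine (norm_add_le _ _).trans ?_
  rw [norm_smul, norm_smul, norm_inv, Real.norm_natCast, Real.norm_eq_abs]
  gcongr

theorem tendsto_iSup_norm_inv_smul_floor_sub {F : ℕ → E} {ν : E}
    (hF : (fun n => F n - (n : ℝ) • ν) =o[atTop] (fun n : ℕ => (n : ℝ))) :
    Tendsto (fun n : ℕ => ⨆ t ∈ Set.Icc (0 : ℝ) 1, ‖(n : ℝ)⁻¹ • F ⌊(n : ℝ) * t⌋₊ - t • ν‖)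
      atTop (𝓝 0) := by
  refine tendsto_order.2 ⟨fun a ha => Eventually.of_forall fun n =>
    ha.trans_le (Real.iSup_nonneg fun t => Real.iSup_nonneg fun _ => norm_nonneg _),
    fun ε hε => ?_⟩
  have hν : Tendsto (fun n : ℕ => (n : ℝ)⁻¹ * ‖ν‖) atTop (𝓝 0) := by
    simpa using (tendsto_inv_atTop_nhds_zero_nat (𝕜 := ℝ)).mul_const ‖ν‖
  filter_upwards [hF.eventually_forall_le_norm_le (half_pos hε),
    hν.eventually (gt_mem_nhds (half_pos hε)), eventually_gt_atTop 0] with n hF_n hν_n hn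
  have hnR : (0 : ℝ) < n := by exact_mod_cast hn
  have hbound : ∀ t ∈ Set.Icc (0 : ℝ) 1,
      ‖(n : ℝ)⁻¹ • F ⌊(n : ℝ) * t⌋₊ - t • ν‖ ≤ ε / 2 + (n : ℝ)⁻¹ * ‖ν‖ := by
    rintro t ⟨ht0, ht1⟩
    have hm : ⌊(n : ℝ) * t⌋₊ ≤ n := Nat.floor_le_of_le (by nlinarith)
    refine (norm_inv_smul_floor_sub_le F ν hn ht0).trans (add_le_add_left ?_ _)
    rw [inv_mul_le_iff₀ hnR]
    exact (hF_n _ hm).trans_eq (mul_comm _ _)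
  have hbound_nonneg : 0 ≤ ε / 2 + (n : ℝ)⁻¹ * ‖ν‖ := by positivity
  calc (⨆ t ∈ Set.Icc (0 : ℝ) 1, ‖(n : ℝ)⁻¹ • F ⌊(n : ℝ) * t⌋₊ - t • ν‖)
      ≤ ε / 2 + (n : ℝ)⁻¹ * ‖ν‖ :=
        Real.iSup_le (fun t => Real.iSup_le (hbound t) hbound_nonneg) hbound_nonneg
    _ < ε := by linarith

end NormedSpace

theorem centre_of_mass_functional_slln_general {d : ℕ}
    {Ω : Type*} [MeasureSpace Ω]
    (ξ : ℕ → Ω → EuclideanSpace ℝ (Fin d))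
    (hindep : iIndepFun (m := fun _ => inferInstance) (fun i : ℕ => ξ (i + 1)) ℙ)
    (hident : ∀ i : ℕ, IdentDistrib (ξ (i + 1)) (ξ 1) ℙ ℙ)
    (hint : Integrable (ξ 1) ℙ)
    (μv : EuclideanSpace ℝ (Fin d)) (hμ : ∫ ω, ξ 1 ω ∂ℙ = μv)
    (S : ℕ → Ω → EuclideanSpace ℝ (Fin d))
    (hS : ∀ n ω, S n ω = ∑ i ∈ Finset.Icc 1 n, ξ i ω)
    (G : ℕ → Ω → EuclideanSpace ℝ (Fin d))
    (hG : ∀ n : ℕ, 1 ≤ n → ∀ ω, G n ω = (n : ℝ)⁻¹ • ∑ i ∈ Finset.Icc 1 n, S i ω) :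
    ∀ᵐ ω ∂ℙ, Tendsto
      (fun n : ℕ => ⨆ t ∈ Icc (0:ℝ) 1,
        ‖(n : ℝ)⁻¹ • G ⌊(n : ℝ) * t⌋₊ ω - (t / 2) • μv‖)
      atTop (nhds 0) := by
  have hS_range : ∀ n ω, S n ω = ∑ i ∈ range n, ξ (i + 1) ω := fun n ω => by
    rw [hS, ← Finset.Ico_add_one_right_eq_Icc, sum_Ico_eq_sum_range]
    simp [Nat.add_comm]
  have slln := strong_law_ae (μ := (ℙ : Measure Ω)) (fun i => ξ (i + 1)) hint
    (fun i j hij => hindep.indepFun hij) (fun i => (hident i).trans (hident 0).symm)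
  filter_upwards [slln] with ω hω
  simp only [← hS_range, zero_add, hμ] at hω
  have hGω : (fun n => G n ω - (n : ℝ) • (2⁻¹ : ℝ) • μv) =o[atTop] (fun n : ℕ => (n : ℝ)) :=
    (isLittleO_cesaro_sub_half_smul (isLittleO_sub_smul_of_tendsto_inv_smul hω)).congr'
      (eventually_atTop.2 ⟨1, fun n hn => by simp only [hG n hn ω]⟩) EventuallyEq.rfl
  have hhalf : ∀ t : ℝ, (t / 2) • μv = t • (2⁻¹ : ℝ) • μv := fun t => by
    rw [smul_smul, div_eq_mul_inv]
  simpa only [hhalf] using tendsto_iSup_norm_inv_smul_floor_sub hGω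

/-- **Functional LLN for the centre of mass.** Almost surely, the rescaled
centre-of-mass trajectories `t ↦ n⁻¹ G_{⌊nt⌋}` converge uniformly on `[0,1]`
to the deterministic trajectory `t ↦ (t/2) μ`. -/
theorem centre_of_mass_functional_slln {d : ℕ} (hd : 1 ≤ d)
    {Ω : Type*} [MeasureSpace Ω] [IsProbabilityMeasure (ℙ : Measure Ω)]
    (ξ : ℕ → Ω → EuclideanSpace ℝ (Fin d))
    (hmeas : ∀ i, Measurable (ξ i))
    (hindep : iIndepFun (m := fun _ => inferInstance) (fun i : ℕ => ξ (i + 1)) ℙ)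
    (hident : ∀ i : ℕ, IdentDistrib (ξ (i + 1)) (ξ 1) ℙ ℙ)
    (hint : Integrable (ξ 1) ℙ)
    (μv : EuclideanSpace ℝ (Fin d)) (hμ : ∫ ω, ξ 1 ω ∂ℙ = μv)
    (S : ℕ → Ω → EuclideanSpace ℝ (Fin d))
    (hS : ∀ n ω, S n ω = ∑ i ∈ Finset.Icc 1 n, ξ i ω)
    (G : ℕ → Ω → EuclideanSpace ℝ (Fin d))
    (hG0 : ∀ ω, G 0 ω = 0)
    (hG : ∀ n : ℕ, 1 ≤ n → ∀ ω, G n ω = (n : ℝ)⁻¹ • ∑ i ∈ Finset.Icc 1 n, S i ω) :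
    ∀ᵐ ω ∂ℙ, Tendsto
      (fun n : ℕ => ⨆ t ∈ Icc (0:ℝ) 1,
        ‖(n : ℝ)⁻¹ • G ⌊(n : ℝ) * t⌋₊ ω - (t / 2) • μv‖)
      atTop (nhds 0) :=
  centre_of_mass_functional_slln_general ξ hindep hident hint μv hμ S hS G hG
end
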